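/- Fix r ≥ 0, σ > 0, Δt > 0, γ̂ > 0 with γ̂ ≥ γ̂* (where γ̂* is as in the CPMM valuation theorem). Define V(P) := (2γ̂/γ̂*)·√P for P > 0. Then V satisfies the dynamic programming fixed-point equation: for every P > 0, V(P) = max{ 2√P , e^{-rΔt}·E[ V(P·e^{(r-σ²/2)Δt + σ√Δt·Z}) + γ̂·F(P, P·e^{(r-σ²/2)Δt + σ√Δt·Z}) ] }, where Z ~ N(0,1) and F(P₀,P₁) := P₁(1/√P₁ - 1/√P₀)⁺ + (√P₁ - √P₀)⁺. -/

import Mathlib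

open Real MeasureTheory ProbabilityTheory

/-- standard normal CDF -/
noncomputable def Phi (x : ℝ) : ℝ := ∫ t in Set.Iic x, Real.exp (-t^2/2) / Real.sqrt (2*π)

/-- critical fee level γ̂* from the CPMM valuation theorem -/
noncomputable def gammaStar (r σ Δt : ℝ) : ℝ :=
  2 * (-1 + (Phi ((r + σ^2/2) * Real.sqrt Δt / σ)
      - Real.exp (-(r*Δt)) * Phi ((r - σ^2/2) * Real.sqrt Δt / σ)) /
      (1 - Real.exp (-(r + σ^2/4)*Δt/2)))⁻¹

/-- CPMM per-block fee functional, with x⁺ = max x 0. -/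
noncomputable def F (P₀ P₁ : ℝ) : ℝ :=
  P₁ * max (1 / Real.sqrt P₁ - 1 / Real.sqrt P₀) 0 + max (Real.sqrt P₁ - Real.sqrt P₀) 0

/-!
Write `P₁ = P e^X` with `X = (r - σ²/2)Δt + σ√Δt Z`. Then `√P₁ = √P e^{X/2}` and the fee
collapses to `F(P, P₁) = √P (e^{X/2} - min(e^X, 1))`, so the continuation value is `√P` times a
combination of `E[e^{X/2}]` and `E[min(e^X, 1)]`. Discounted, the first is
`κ = e^{-(r+σ²/4)Δt/2}` and the second is `1 - D`, with `D` the at-the-money Black–Scholes call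
price. With `c = 2γ/γ̂*` the continuation value is therefore `√P (cκ + γ(D - (1 - κ)))`, which
equals `c√P` because `γ̂* = 2(1 - κ)/(D - (1 - κ))`; and `c ≥ 2` because `γ̂* > 0`, which holds
since `e^{X/2} > min(e^X, 1)` off the null event `X = 0`.
-/

open Set

lemma integral_exp_mul_gaussianReal (c : ℝ) :
    ∫ x, exp (c * x) ∂gaussianReal 0 1 = exp (c ^ 2 / 2) := by
  simpa [mgf] using congrFun (mgf_fun_id_gaussianReal (μ := 0) (v := 1)) c

lemma measureReal_gaussianReal_eq_setIntegral (m : ℝ) (s : Set ℝ) :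
    (gaussianReal m 1).real s = ∫ x in s, gaussianPDFReal m 1 x := by
  rw [measureReal_def, gaussianReal_apply_eq_integral _ one_ne_zero, ENNReal.toReal_ofReal
    (setIntegral_nonneg_of_ae_restrict (ae_of_all _ (gaussianPDFReal_nonneg _ _)))]

lemma Phi_eq_measureReal_Iic (t : ℝ) : Phi t = (gaussianReal 0 1).real (Iic t) := by
  rw [measureReal_gaussianReal_eq_setIntegral, Phi]
  refine setIntegral_congr_fun measurableSet_Iic fun x _ ↦ ?_
  simp [gaussianPDFReal, div_eq_mul_inv, mul_comm]

lemma measureReal_Iic_gaussianReal (m t : ℝ) :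
    (gaussianReal m 1).real (Iic t) = Phi (t - m) := by
  rw [← zero_add m, ← gaussianReal_map_add_const,
    map_measureReal_apply (by fun_prop) measurableSet_Iic, Phi_eq_measureReal_Iic, zero_add]
  congr 1
  ext x
  simp [le_sub_iff_add_le]

lemma Phi_neg (t : ℝ) : Phi (-t) = 1 - Phi t := by
  have := nullSingletonClass_gaussianReal (μ := 0) one_ne_zero
  have hsymm : (gaussianReal 0 1).map (fun x ↦ -x) = gaussianReal 0 1 := by
    simpa using gaussianReal_map_neg (μ := 0) (v := 1)
  rw [Phi_eq_measureReal_Iic, Phi_eq_measureReal_Iic, ← probReal_compl_eq_one_sub measurableSet_Iic,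
    compl_Iic, measureReal_congr Ioi_ae_eq_Ici]
  conv_rhs => rw [← hsymm, map_measureReal_apply (by fun_prop) measurableSet_Ici]
  congr 1
  ext x
  simp

lemma exp_mul_mul_gaussianPDFReal (c x : ℝ) :
    exp (c * x) * gaussianPDFReal 0 1 x = exp (c ^ 2 / 2) * gaussianPDFReal c 1 x := by
  simp only [gaussianPDFReal, NNReal.coe_one]
  rw [mul_left_comm, ← exp_add, mul_left_comm, ← exp_add]
  ring_nf

lemma setIntegral_exp_mul_gaussianReal (c : ℝ) {s : Set ℝ} (hs : MeasurableSet s) :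
    ∫ x in s, exp (c * x) ∂gaussianReal 0 1 = exp (c ^ 2 / 2) * (gaussianReal c 1).real s := by
  rw [← integral_indicator hs, integral_gaussianReal_eq_integral_smul one_ne_zero,
    measureReal_gaussianReal_eq_setIntegral, ← integral_const_mul, ← integral_indicator hs]
  congr 1 with x
  by_cases hx : x ∈ s
  · simp only [hx, indicator_of_mem, smul_eq_mul]
    rw [mul_comm, exp_mul_mul_gaussianPDFReal]
  · simp [hx]

lemma integrable_exp_affine_gaussianReal (p c : ℝ) :
    Integrable (fun x ↦ exp (p + c * x)) (gaussianReal 0 1) := by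
  simpa only [exp_add] using (integrable_exp_mul_gaussianReal c).const_mul (exp p)

lemma integral_exp_affine_gaussianReal (p c : ℝ) :
    ∫ x, exp (p + c * x) ∂gaussianReal 0 1 = exp (p + c ^ 2 / 2) := by
  simp_rw [exp_add, integral_const_mul, integral_exp_mul_gaussianReal]

lemma integrable_min_exp_affine_one (a s : ℝ) :
    Integrable (fun x ↦ min (exp (a + s * x)) 1) (gaussianReal 0 1) :=
  (integrable_exp_affine_gaussianReal a s).inf (integrable_const 1)

lemma integral_min_exp_affine_one {s : ℝ} (a : ℝ) (hs : 0 < s) :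
    ∫ x, min (exp (a + s * x)) 1 ∂gaussianReal 0 1
      = exp (a + s ^ 2 / 2) * (1 - Phi (a / s + s)) + Phi (a / s) := by
  have hneg : ∀ x, a + s * x ≤ 0 ↔ x ≤ -(a / s) := fun x ↦ by
    rw [le_neg, div_le_iff₀ hs]; constructor <;> intro h <;> linarith
  have hIic : ∫ x in Iic (-(a / s)), min (exp (a + s * x)) 1 ∂gaussianReal 0 1
      = ∫ x in Iic (-(a / s)), exp a * exp (s * x) ∂gaussianReal 0 1 :=
    setIntegral_congr_fun measurableSet_Iic fun x hx ↦ by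
      rw [min_eq_left (exp_le_one_iff.2 ((hneg x).2 hx)), exp_add]
  have hIoi : ∫ x in Ioi (-(a / s)), min (exp (a + s * x)) 1 ∂gaussianReal 0 1
      = ∫ x in Ioi (-(a / s)), (1 : ℝ) ∂gaussianReal 0 1 :=
    setIntegral_congr_fun measurableSet_Ioi fun x hx ↦
      min_eq_right (one_le_exp_iff.2 (not_le.1 (mt (hneg x).1 (not_le.2 hx))).le)
  rw [← integral_add_compl measurableSet_Iic (integrable_min_exp_affine_one a s),
    compl_Iic, hIic, hIoi, integral_const_mul, setIntegral_exp_mul_gaussianReal _ measurableSet_Iic,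
    measureReal_Iic_gaussianReal, setIntegral_const, smul_eq_mul, mul_one, ← compl_Iic,
    probReal_compl_eq_one_sub measurableSet_Iic, ← Phi_eq_measureReal_Iic, ← neg_add', Phi_neg,
    Phi_neg, sub_sub_cancel, ← mul_assoc, ← exp_add]

lemma min_exp_one_lt_exp_half {y : ℝ} (hy : y ≠ 0) : min (exp y) 1 < exp (y / 2) := by
  rcases hy.lt_or_gt with hy | hy
  · exact (min_le_left _ _).trans_lt (exp_lt_exp.2 (by linarith))
  · exact (min_le_right _ _).trans_lt (one_lt_exp_iff.2 (by linarith))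

lemma min_exp_one_le_exp_half (y : ℝ) : min (exp y) 1 ≤ exp (y / 2) := by
  rcases eq_or_ne y 0 with rfl | hy
  · simp
  · exact (min_exp_one_lt_exp_half hy).le

lemma integral_min_exp_affine_one_lt {s : ℝ} (a : ℝ) (hs : s ≠ 0) :
    ∫ x, min (exp (a + s * x)) 1 ∂gaussianReal 0 1
      < ∫ x, exp ((a + s * x) / 2) ∂gaussianReal 0 1 := by
  have := nullSingletonClass_gaussianReal (μ := 0) one_ne_zero
  have hhalf : Integrable (fun x ↦ exp ((a + s * x) / 2)) (gaussianReal 0 1) := by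
    simpa only [add_div, mul_div_right_comm] using
      integrable_exp_affine_gaussianReal (a / 2) (s / 2)
  have hmin := integrable_min_exp_affine_one a s
  rw [← sub_pos, ← integral_sub hhalf hmin, integral_pos_iff_support_of_nonneg
    (fun x ↦ sub_nonneg.2 (min_exp_one_le_exp_half _)) (hhalf.sub hmin)]
  refine lt_of_lt_of_le ?_ (measure_mono (s := {-(a / s)}ᶜ) fun x hx ↦ ?_)
  · rw [← Measure.restrict_apply_univ, restrict_compl_singleton, measure_univ]
    exact one_pos
  · refine (sub_pos.2 (min_exp_one_lt_exp_half fun h ↦ hx ?_)).ne'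
    rw [mem_singleton_iff, eq_neg_iff_add_eq_zero]
    field_simp
    linarith

lemma F_eq_sqrt_sub_min {P₀ P₁ : ℝ} (h₀ : 0 < P₀) (h₁ : 0 ≤ P₁) :
    F P₀ P₁ = √P₁ - min (P₁ / √P₀) √P₀ := by
  obtain ⟨u, hu, rfl⟩ : ∃ u, 0 ≤ u ∧ P₁ = u ^ 2 := ⟨√P₁, sqrt_nonneg _, (sq_sqrt h₁).symm⟩
  have hv : 0 < √P₀ := sqrt_pos.2 h₀
  have hfirst : u ^ 2 * (1 / u - 1 / √P₀) = u - u ^ 2 / √P₀ := by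
    rcases hu.eq_or_lt with rfl | hu
    · simp
    · field_simp
  have hw : u ^ 2 / √P₀ * √P₀ = u ^ 2 := div_mul_cancel₀ _ hv.ne'
  rw [F, sqrt_sq hu, mul_max_of_nonneg _ _ (sq_nonneg u), mul_zero, hfirst]
  rcases le_total u √P₀ with h | h
  · rw [max_eq_left, max_eq_right, min_eq_left] <;> nlinarith
  · rw [max_eq_right, max_eq_left, min_eq_right] <;> nlinarith

lemma continuation_integrand_eq (c γ : ℝ) {P : ℝ} (hP : 0 < P) (y : ℝ) :
    c * √(P * exp y) + γ * F P (P * exp y)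
      = √P * (c * exp (y / 2) + γ * (exp (y / 2) - min (exp y) 1)) := by
  have hsqrt : √(P * exp y) = √P * exp (y / 2) := by rw [sqrt_mul hP.le, exp_half]
  have hratio : P * exp y / √P = √P * exp y := by
    rw [div_eq_iff (sqrt_pos.2 hP).ne', mul_right_comm, mul_self_sqrt hP.le]
  have hmin : min (√P * exp y) √P = √P * min (exp y) 1 := by
    rw [mul_min_of_nonneg _ _ (sqrt_nonneg P), mul_one]
  rw [F_eq_sqrt_sub_min hP (by positivity), hsqrt, hratio, hmin]
  ring

/-- Black–Scholes price of an at-the-money call with unit spot and strike, maturity `Δt`. -/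
noncomputable def atmCallPrice (r σ Δt : ℝ) : ℝ :=
  Phi ((r + σ ^ 2 / 2) * √Δt / σ) - exp (-(r * Δt)) * Phi ((r - σ ^ 2 / 2) * √Δt / σ)

lemma gammaStar_eq {r σ Δt : ℝ} (hκ : exp (-(r + σ ^ 2 / 4) * Δt / 2) ≠ 1) :
    gammaStar r σ Δt = 2 * (1 - exp (-(r + σ ^ 2 / 4) * Δt / 2))
      / (atmCallPrice r σ Δt - (1 - exp (-(r + σ ^ 2 / 4) * Δt / 2))) := by
  have hB : 1 - exp (-(r + σ ^ 2 / 4) * Δt / 2) ≠ 0 := sub_ne_zero.2 hκ.symm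
  change 2 * (-1 + atmCallPrice r σ Δt / _)⁻¹ = _
  rw [neg_add_eq_sub, div_sub_one hB, inv_div, ← mul_div_assoc]

lemma discounted_integral_exp_half (r σ : ℝ) {Δt : ℝ} (hΔt : 0 ≤ Δt) :
    exp (-(r * Δt)) * ∫ x, exp (((r - σ ^ 2 / 2) * Δt + σ * √Δt * x) / 2) ∂gaussianReal 0 1
      = exp (-(r + σ ^ 2 / 4) * Δt / 2) := by
  simp_rw [add_div, mul_div_right_comm (σ * √Δt)]
  rw [integral_exp_affine_gaussianReal, ← exp_add, div_pow, mul_pow, sq_sqrt hΔt]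
  congr 1
  ring

lemma discounted_integral_min_exp_one (r : ℝ) {σ Δt : ℝ} (hσ : 0 < σ) (hΔt : 0 < Δt) :
    exp (-(r * Δt)) * ∫ x, min (exp ((r - σ ^ 2 / 2) * Δt + σ * √Δt * x)) 1 ∂gaussianReal 0 1
      = 1 - atmCallPrice r σ Δt := by
  have hsqrt : √Δt ^ 2 = Δt := sq_sqrt hΔt.le
  have hd : (r - σ ^ 2 / 2) * Δt / (σ * √Δt) = (r - σ ^ 2 / 2) * √Δt / σ := by
    field_simp; rw [hsqrt]
  have hd' : (r - σ ^ 2 / 2) * √Δt / σ + σ * √Δt = (r + σ ^ 2 / 2) * √Δt / σ := by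
    field_simp; ring
  have hexp : exp (-(r * Δt)) * exp ((r - σ ^ 2 / 2) * Δt + (σ * √Δt) ^ 2 / 2) = 1 := by
    rw [← exp_add, mul_pow, hsqrt, ← exp_zero]; congr 1; ring
  rw [integral_min_exp_affine_one _ (by positivity), hd, hd', atmCallPrice]
  linear_combination (1 - Phi ((r + σ ^ 2 / 2) * √Δt / σ)) * hexp

lemma discounted_integral_continuation {Ω : Type*} [MeasurableSpace Ω] {μ : Measure Ω}
    {Z : Ω → ℝ} (hZ : μ.map Z = gaussianReal 0 1) (r : ℝ) {σ Δt : ℝ} (hσ : 0 < σ) (hΔt : 0 < Δt)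
    (c γ : ℝ) {P : ℝ} (hP : 0 < P) :
    exp (-(r * Δt)) * ∫ ω, (c * √(P * exp ((r - σ ^ 2 / 2) * Δt + σ * √Δt * Z ω))
        + γ * F P (P * exp ((r - σ ^ 2 / 2) * Δt + σ * √Δt * Z ω))) ∂μ
      = √P * (c * exp (-(r + σ ^ 2 / 4) * Δt / 2)
        + γ * (atmCallPrice r σ Δt - (1 - exp (-(r + σ ^ 2 / 4) * Δt / 2)))) := by
  set X : ℝ → ℝ := fun x ↦ (r - σ ^ 2 / 2) * Δt + σ * √Δt * x
  have hZm : AEMeasurable Z μ := aemeasurable_of_map_neZero (by rw [hZ]; infer_instance)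
  have hhalf : Integrable (fun x ↦ exp (X x / 2)) (gaussianReal 0 1) := by
    simpa only [X, add_div, mul_div_right_comm (σ * √Δt)] using
      integrable_exp_affine_gaussianReal ((r - σ ^ 2 / 2) * Δt / 2) (σ * √Δt / 2)
  have hmin : Integrable (fun x ↦ min (exp (X x)) 1) (gaussianReal 0 1) :=
    integrable_min_exp_affine_one _ _
  have hdiff : Integrable (fun x ↦ exp (X x / 2) - min (exp (X x)) 1) (gaussianReal 0 1) :=
    hhalf.sub hmin
  have hlaw : ∫ ω, (c * √(P * exp (X (Z ω))) + γ * F P (P * exp (X (Z ω)))) ∂μ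
      = ∫ x, √P * (c * exp (X x / 2) + γ * (exp (X x / 2) - min (exp (X x)) 1))
          ∂gaussianReal 0 1 := by
    rw [← hZ, integral_map hZm (by fun_prop)]
    simp_rw [continuation_integrand_eq c γ hP]
  rw [hlaw, integral_const_mul, integral_add (hhalf.const_mul c) (hdiff.const_mul γ),
    integral_const_mul, integral_const_mul, integral_sub hhalf hmin]
  linear_combination √P * (c + γ) * discounted_integral_exp_half r σ hΔt.le
    - √P * γ * discounted_integral_min_exp_one r hσ hΔt

theorem stmt6_general {Ω : Type*} [MeasurableSpace Ω] (μ : Measure Ω)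
    (Z : Ω → ℝ) (hZ : Measure.map Z μ = gaussianReal 0 1)
    (r σ Δt γ : ℝ) (hr : 0 ≤ r) (hσ : 0 < σ) (hΔt : 0 < Δt)
    (hγ : gammaStar r σ Δt ≤ γ) :
    ∀ P : ℝ, 0 < P →
      (2*γ/gammaStar r σ Δt) * Real.sqrt P
        = max (2 * Real.sqrt P)
            (Real.exp (-(r*Δt)) *
              ∫ ω, ((2*γ/gammaStar r σ Δt) *
                    Real.sqrt (P * Real.exp ((r - σ^2/2)*Δt + σ * Real.sqrt Δt * Z ω))
                  + γ * F P (P * Real.exp ((r - σ^2/2)*Δt + σ * Real.sqrt Δt * Z ω))) ∂μ) := by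
  intro P hP
  set κ := exp (-(r + σ ^ 2 / 4) * Δt / 2)
  set D := atmCallPrice r σ Δt
  have hκ : κ < 1 := exp_lt_one_iff.2 (by
    nlinarith [add_pos_of_nonneg_of_pos hr (by positivity : 0 < σ ^ 2 / 4)])
  have hD : 1 - κ < D := by
    have h := mul_lt_mul_of_pos_left (integral_min_exp_affine_one_lt ((r - σ ^ 2 / 2) * Δt)
      (mul_pos hσ (sqrt_pos.2 hΔt)).ne') (exp_pos (-(r * Δt)))
    rw [discounted_integral_min_exp_one r hσ hΔt, discounted_integral_exp_half r σ hΔt.le] at h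
    linarith
  have hγstar : gammaStar r σ Δt = 2 * (1 - κ) / (D - (1 - κ)) := gammaStar_eq hκ.ne
  have hγstar_pos : 0 < gammaStar r σ Δt := by
    rw [hγstar]; exact div_pos (by linarith) (by linarith)
  have hc : 2 ≤ 2 * γ / gammaStar r σ Δt := by rw [le_div_iff₀ hγstar_pos]; linarith
  have hfixed : 2 * γ / gammaStar r σ Δt * κ + γ * (D - (1 - κ)) = 2 * γ / gammaStar r σ Δt := by
    have hB : 1 - κ ≠ 0 := (sub_pos.2 hκ).ne'
    have hDB : D - (1 - κ) ≠ 0 := (sub_pos.2 hD).ne'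
    rw [hγstar]; field_simp; ring
  rw [discounted_integral_continuation hZ r hσ hΔt _ γ hP, hfixed, mul_comm √P,
    max_eq_right (mul_le_mul_of_nonneg_right hc (sqrt_nonneg P))]

theorem stmt6 {Ω : Type*} [MeasurableSpace Ω] (μ : Measure Ω) [IsProbabilityMeasure μ]
    (Z : Ω → ℝ) (hZ : Measure.map Z μ = gaussianReal 0 1)
    (r σ Δt γ : ℝ) (hr : 0 ≤ r) (hσ : 0 < σ) (hΔt : 0 < Δt) (hγpos : 0 < γ)
    (hγ : gammaStar r σ Δt ≤ γ) :
    ∀ P : ℝ, 0 < P →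
      (2*γ/gammaStar r σ Δt) * Real.sqrt P
        = max (2 * Real.sqrt P)
            (Real.exp (-(r*Δt)) *
              ∫ ω, ((2*γ/gammaStar r σ Δt) *
                    Real.sqrt (P * Real.exp ((r - σ^2/2)*Δt + σ * Real.sqrt Δt * Z ω))
                  + γ * F P (P * Real.exp ((r - σ^2/2)*Δt + σ * Real.sqrt Δt * Z ω))) ∂μ) :=
  stmt6_general μ Z hZ r σ Δt γ hr hσ hΔt hγ
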